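/- arXiv:2410.20353 — 7 statements merged into one kernel-verified Lean document; each statement's English description precedes it below -/
import Mathlib

section
/- A graph is P4-free (contains no induced path on 4 vertices) if and only if it is a cograph, where cographs are defined inductively: the single-vertex graph is a cograph, the disjoint union of two cographs is a cograph, and the join of two cographs is a cograph. -/
/-- Disjoint union of two simple graphs. -/
def disjUnion {V W : Type} (G : SimpleGraph V) (H : SimpleGraph W) :
    SimpleGraph (V ⊕ W) where
  Adj x y := Sum.LiftRel G.Adj H.Adj x y
  symm := by
    constructor
    intro x y h
    cases h with
    | inl h => exact Sum.LiftRel.inl h.symm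
    | inr h => exact Sum.LiftRel.inr h.symm
  loopless := by
    constructor
    intro x h
    cases h with
    | inl h => exact G.irrefl h
    | inr h => exact H.irrefl h

/-- Join of two simple graphs: disjoint union plus all edges across. -/
def graphJoin {V W : Type} (G : SimpleGraph V) (H : SimpleGraph W) :
    SimpleGraph (V ⊕ W) where
  Adj x y := Sum.LiftRel G.Adj H.Adj x y ∨ (x.isLeft ∧ y.isRight) ∨ (x.isRight ∧ y.isLeft)
  symm := by
    constructor
    rintro x y (h | ⟨h1, h2⟩ | ⟨h1, h2⟩)
    · cases h with
      | inl h => exact Or.inl (Sum.LiftRel.inl h.symm)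
      | inr h => exact Or.inl (Sum.LiftRel.inr h.symm)
    · exact Or.inr (Or.inr ⟨h2, h1⟩)
    · exact Or.inr (Or.inl ⟨h2, h1⟩)
  loopless := by
    constructor
    rintro x (h | ⟨h1, h2⟩ | ⟨h1, h2⟩)
    · cases h with
      | inl h => exact G.irrefl h
      | inr h => exact H.irrefl h
    · cases x <;> simp_all
    · cases x <;> simp_all

/-- Cographs, defined inductively: the one-vertex graph is a cograph, and the class is
closed under disjoint unions, joins, and graph isomorphism. -/
inductive IsCograph : (V : Type) → SimpleGraph V → Prop
  | single : IsCograph PUnit ⊥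
  | union {V W : Type} {G : SimpleGraph V} {H : SimpleGraph W} :
      IsCograph V G → IsCograph W H → IsCograph (V ⊕ W) (disjUnion G H)
  | join {V W : Type} {G : SimpleGraph V} {H : SimpleGraph W} :
      IsCograph V G → IsCograph W H → IsCograph (V ⊕ W) (graphJoin G H)
  | iso {V W : Type} {G : SimpleGraph V} {H : SimpleGraph W} :
      IsCograph V G → G ≃g H → IsCograph W H

/-- `G` contains an induced path on four vertices. -/
def HasInducedP4 {V : Type} (G : SimpleGraph V) : Prop :=
  ∃ a b c d : V, a ≠ b ∧ a ≠ c ∧ a ≠ d ∧ b ≠ c ∧ b ≠ d ∧ c ≠ d ∧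
    G.Adj a b ∧ G.Adj b c ∧ G.Adj c d ∧ ¬G.Adj a c ∧ ¬G.Adj a d ∧ ¬G.Adj b d

/-! A `P₄` is connected and self-complementary, so it cannot straddle a disjoint union, nor,
passing to complements, a join: cographs are `P₄`-free.

Conversely (Seinsche), a finite `P₄`-free graph on at least two vertices is disconnected or has
disconnected complement. Remove a vertex `v`: by induction and self-complementarity, the rest
may be assumed to be a join `A + B`. Then either `v` is complete to `A` or to `B`, or `v` is
isolated, or `P₄`-freeness makes the neighbourhood of `v` complete to its non-neighbourhood;
each case gives a cut. Splitting along such cuts builds the graph from single vertices. -/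

section InducedP4

variable {V W : Type} {G : SimpleGraph V} {H : SimpleGraph W}

/-- The distinctness conditions in `HasInducedP4` follow from the six adjacency conditions. -/
lemma hasInducedP4_iff : HasInducedP4 G ↔ ∃ a b c d : V,
    G.Adj a b ∧ G.Adj b c ∧ G.Adj c d ∧ ¬G.Adj a c ∧ ¬G.Adj a d ∧ ¬G.Adj b d := by
  refine ⟨fun ⟨a, b, c, d, _, _, _, _, _, _, h⟩ => ⟨a, b, c, d, h⟩, ?_⟩
  rintro ⟨a, b, c, d, hab, hbc, hcd, hac, had, hbd⟩
  refine ⟨a, b, c, d, hab.ne, ?_, ?_, hbc.ne, ?_, hcd.ne, hab, hbc, hcd, hac, had, hbd⟩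
  · rintro rfl; exact had hcd
  · rintro rfl; exact hbd hab.symm
  · rintro rfl; exact had hab

lemma HasInducedP4.map (f : G ↪g H) (h : HasInducedP4 G) : HasInducedP4 H := by
  obtain ⟨a, b, c, d, h⟩ := hasInducedP4_iff.mp h
  exact hasInducedP4_iff.mpr ⟨f a, f b, f c, f d, by simpa only [f.map_adj_iff] using h⟩

/-- `P₄` is self-complementary: the path `a b c d` of `Gᶜ` is the path `b d a c` of `G`. -/
lemma HasInducedP4.of_compl (h : HasInducedP4 Gᶜ) : HasInducedP4 G := by
  obtain ⟨a, b, c, d, -, hac, had, -, hbd, -, h⟩ := h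
  simp only [SimpleGraph.compl_adj, not_and, not_not] at h
  obtain ⟨⟨-, hab⟩, ⟨-, hbc⟩, ⟨-, hcd⟩, hac', had', hbd'⟩ := h
  exact hasInducedP4_iff.mpr
    ⟨b, d, a, c, hbd' hbd, (had' had).symm, hac' hac, (hab ·.symm), hbc, (hcd ·.symm)⟩

lemma hasInducedP4_compl_iff : HasInducedP4 Gᶜ ↔ HasInducedP4 G :=
  ⟨HasInducedP4.of_compl, fun h => .of_compl (by rwa [compl_compl])⟩

@[simp] lemma disjUnion_adj {x y : V ⊕ W} :
    (disjUnion G H).Adj x y ↔ Sum.LiftRel G.Adj H.Adj x y := Iff.rfl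

/-- A `P₄` is connected, so it lies inside one of the two parts of a disjoint union. -/
lemma HasInducedP4.disjUnion (h : HasInducedP4 (disjUnion G H)) :
    HasInducedP4 G ∨ HasInducedP4 H := by
  obtain ⟨a, b, c, d, hab, hbc, hcd, h⟩ := hasInducedP4_iff.mp h
  simp only [disjUnion_adj] at hab hbc hcd h
  rcases a with a | a
  · obtain ⟨-, b, -, -, rfl⟩ := hab.exists_of_isLeft_left rfl
    obtain ⟨-, c, -, -, rfl⟩ := hbc.exists_of_isLeft_left rfl
    obtain ⟨-, d, -, -, rfl⟩ := hcd.exists_of_isLeft_left rfl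
    simp only [Sum.liftRel_inl_inl] at hab hbc hcd h
    exact .inl (hasInducedP4_iff.mpr ⟨a, b, c, d, hab, hbc, hcd, h⟩)
  · obtain ⟨-, b, -, -, rfl⟩ := hab.exists_of_isRight_left rfl
    obtain ⟨-, c, -, -, rfl⟩ := hbc.exists_of_isRight_left rfl
    obtain ⟨-, d, -, -, rfl⟩ := hcd.exists_of_isRight_left rfl
    simp only [Sum.liftRel_inr_inr] at hab hbc hcd h
    exact .inr (hasInducedP4_iff.mpr ⟨a, b, c, d, hab, hbc, hcd, h⟩)

lemma compl_graphJoin : (graphJoin G H)ᶜ = disjUnion Gᶜ Hᶜ := by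
  ext (x | x) (y | y) <;> simp [graphJoin, SimpleGraph.compl_adj]

lemma HasInducedP4.graphJoin (h : HasInducedP4 (graphJoin G H)) :
    HasInducedP4 G ∨ HasInducedP4 H := by
  rw [← hasInducedP4_compl_iff, compl_graphJoin] at h
  simpa only [hasInducedP4_compl_iff] using h.disjUnion

end InducedP4

lemma IsCograph.not_hasInducedP4 {V : Type} {G : SimpleGraph V} (hG : IsCograph V G) :
    ¬HasInducedP4 G := by
  induction hG with
  | single => exact fun ⟨a, b, _, _, hab, _⟩ => hab (Subsingleton.elim a b)
  | union _ _ ihG ihH => exact fun h => h.disjUnion.elim ihG ihH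
  | join _ _ ihG ihH => exact fun h => h.graphJoin.elim ihG ihH
  | iso _ e ih => exact fun h => ih (h.map e.symm.toEmbedding)

section Decomposition

variable {V : Type} {G : SimpleGraph V}

/-- `G[s]` or its complement is disconnected, as witnessed by the cut `(S, s \ S)`. -/
def IsDecomposableOn (G : SimpleGraph V) (s : Set V) : Prop :=
  ∃ S ⊆ s, S.Nonempty ∧ (s \ S).Nonempty ∧
    ((∀ a ∈ S, ∀ b ∈ s \ S, ¬G.Adj a b) ∨ ∀ a ∈ S, ∀ b ∈ s \ S, G.Adj a b)

lemma IsDecomposableOn.of_compl {s : Set V} (h : IsDecomposableOn Gᶜ s) :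
    IsDecomposableOn G s := by
  obtain ⟨S, hSs, hS, hsS, h⟩ := h
  refine ⟨S, hSs, hS, hsS, h.symm.imp (fun h a ha b hb => ?_) fun h a ha b hb => ?_⟩
  · exact ((G.compl_adj a b).mp (h a ha b hb)).2
  · by_contra hab
    exact h a ha b hb ((G.compl_adj a b).mpr ⟨ne_of_mem_of_not_mem ha hb.2, hab⟩)

lemma isDecomposableOn_pair {v w : V} (hvw : v ≠ w) : IsDecomposableOn G {v, w} := by
  refine ⟨{v}, by simp, Set.singleton_nonempty v, by simp [Set.pair_sdiff_left hvw], ?_⟩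
  simp only [Set.pair_sdiff_left hvw, Set.mem_singleton_iff, forall_eq]
  exact em' (G.Adj v w)

/-- Were `x` and `m` non-adjacent, they would lie on the same side and form a `P₄` with a vertex
that `v` misses on the other side. -/
lemma adj_of_not_hasInducedP4 (hG : ¬HasInducedP4 G) {A B : Set V}
    (hAB : ∀ a ∈ A, ∀ b ∈ B, G.Adj a b) {v a₀ b₀ x m : V} (ha₀ : a₀ ∈ A) (hb₀ : b₀ ∈ B)
    (hva₀ : ¬G.Adj v a₀) (hvb₀ : ¬G.Adj v b₀) (hx : x ∈ A ∪ B) (hm : m ∈ A ∪ B)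
    (hvx : G.Adj v x) (hvm : ¬G.Adj v m) : G.Adj x m := by
  by_contra hxm
  rcases hx with hxA | hxB <;> rcases hm with hmA | hmB
  · exact hG (hasInducedP4_iff.mpr
      ⟨v, x, b₀, m, hvx, hAB x hxA b₀ hb₀, (hAB m hmA b₀ hb₀).symm, hvb₀, hvm, hxm⟩)
  · exact hxm (hAB x hxA m hmB)
  · exact hxm (hAB m hmA x hxB).symm
  · exact hG (hasInducedP4_iff.mpr
      ⟨v, x, a₀, m, hvx, (hAB a₀ ha₀ x hxB).symm, hAB a₀ ha₀ m hmB, hva₀, hvm, hxm⟩)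

lemma isDecomposableOn_insert (hG : ¬HasInducedP4 G) {v : V} {t S : Set V} (hvt : v ∉ t)
    (hSt : S ⊆ t) (hS : S.Nonempty) (htS : (t \ S).Nonempty)
    (hcross : ∀ a ∈ S, ∀ b ∈ t \ S, G.Adj a b) : IsDecomposableOn G (insert v t) := by
  have hv : v ∈ insert v t := t.mem_insert v
  by_cases hA : ∀ a ∈ S, G.Adj v a
  · refine ⟨S, hSt.trans (t.subset_insert v), hS, ⟨v, hv, (hvt <| hSt ·)⟩, .inr ?_⟩
    rintro a ha b ⟨rfl | hbt, hbS⟩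
    exacts [(hA a ha).symm, hcross a ha b ⟨hbt, hbS⟩]
  by_cases hB : ∀ b ∈ t \ S, G.Adj v b
  · refine ⟨t \ S, Set.sdiff_subset.trans (t.subset_insert v), htS, ⟨v, hv, (hvt ·.1)⟩, .inr ?_⟩
    rintro b hb a ⟨rfl | hat, haS⟩
    exacts [(hB b hb).symm, (hcross a (by_contra fun h => haS ⟨hat, h⟩) b hb).symm]
  push Not at hA hB
  obtain ⟨a₀, ha₀, hva₀⟩ := hA
  obtain ⟨b₀, hb₀, hvb₀⟩ := hB
  by_cases hN : ∀ x ∈ t, ¬G.Adj v x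
  · have ha₀t := hSt ha₀
    refine ⟨{v}, by simp, Set.singleton_nonempty v,
      ⟨a₀, .inr ha₀t, ne_of_mem_of_not_mem ha₀t hvt⟩, .inl ?_⟩
    rintro _ rfl b ⟨rfl | hbt, -⟩
    exacts [G.irrefl, hN b hbt]
  push Not at hN
  obtain ⟨c, hct, hvc⟩ := hN
  refine ⟨{x ∈ t | G.Adj v x}, fun x hx => .inr hx.1, ⟨c, hct, hvc⟩, ⟨v, hv, (hvt ·.1)⟩, .inr ?_⟩
  rintro x ⟨hxt, hvx⟩ m ⟨rfl | hmt, hm⟩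
  · exact hvx.symm
  have ht : t = S ∪ t \ S := (Set.union_sdiff_cancel hSt).symm
  exact adj_of_not_hasInducedP4 hG hcross ha₀ hb₀ hva₀ hvb₀ (ht ▸ hxt) (ht ▸ hmt) hvx
    fun h => hm ⟨hmt, h⟩

lemma isDecomposableOn_of_not_hasInducedP4 (hG : ¬HasInducedP4 G) {s : Set V} (hs : s.Finite)
    (hs₂ : s.Nontrivial) : IsDecomposableOn G s := by
  induction s, hs using Set.Finite.induction_on with
  | empty => exact absurd hs₂ Set.not_nontrivial_empty
  | @insert v t hvt _ ih =>
    rcases t.subsingleton_or_nontrivial with ht | ht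
    · rcases ht.eq_empty_or_singleton with rfl | ⟨w, rfl⟩
      · exact absurd hs₂ (by simp)
      · exact isDecomposableOn_pair (by simpa using hvt)
    obtain ⟨S, hSt, hS, htS, hno | hall⟩ := ih ht
    · refine (isDecomposableOn_insert (mt HasInducedP4.of_compl hG) hvt hSt hS htS
        fun a ha b hb => ?_).of_compl
      exact (G.compl_adj a b).mpr ⟨ne_of_mem_of_not_mem ha hb.2, hno a ha b hb⟩
    · exact isDecomposableOn_insert hG hvt hSt hS htS hall

end Decomposition

section Construction

variable {V : Type}

noncomputable def disjUnionInduceIso (G : SimpleGraph V) (S : Set V)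
    (h : ∀ a ∈ S, ∀ b ∉ S, ¬G.Adj a b) : disjUnion (G.induce S) (G.induce Sᶜ) ≃g G := by
  classical
  refine ⟨Equiv.Set.sumCompl S, ?_⟩
  rintro (⟨x, hx⟩ | ⟨x, hx⟩) (⟨y, hy⟩ | ⟨y, hy⟩)
  · simp
  · simpa using h x hx y hy
  · simpa using fun h' => h y hy x hx h'.symm
  · simp

noncomputable def graphJoinInduceIso (G : SimpleGraph V) (S : Set V)
    (h : ∀ a ∈ S, ∀ b ∉ S, G.Adj a b) : graphJoin (G.induce S) (G.induce Sᶜ) ≃g G := by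
  classical
  refine ⟨Equiv.Set.sumCompl S, ?_⟩
  rintro (⟨x, hx⟩ | ⟨x, hx⟩) (⟨y, hy⟩ | ⟨y, hy⟩)
  · simp [graphJoin]
  · simpa [graphJoin] using h x hx y hy
  · simpa [graphJoin] using (h y hy x hx).symm
  · simp [graphJoin]

lemma isCograph_of_subsingleton [Subsingleton V] [Nonempty V] (G : SimpleGraph V) :
    IsCograph V G :=
  .iso .single ⟨equivOfSubsingletonOfSubsingleton (fun _ => Classical.arbitrary V) fun _ => (),
    fun {_ _} => by simp⟩

lemma IsCograph.of_not_hasInducedP4 [Finite V] [Nonempty V] {G : SimpleGraph V}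
    (hG : ¬HasInducedP4 G) : IsCograph V G := by
  refine Finite.induction_subsingleton_or_nontrivial
    (P := fun V => ∀ [Nonempty V] (G : SimpleGraph V), ¬HasInducedP4 G → IsCograph V G)
    V (fun V _ _ _ G _ => isCograph_of_subsingleton G) (fun V _ _ ih _ G hG => ?_) G hG
  obtain ⟨S, -, ⟨s, hs⟩, ⟨t, -, ht⟩, hcut⟩ :=
    isDecomposableOn_of_not_hasInducedP4 hG Set.finite_univ Set.nontrivial_univ
  have : Nonempty S := ⟨⟨s, hs⟩⟩
  have : Nonempty ↥Sᶜ := ⟨⟨t, ht⟩⟩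
  have hS : IsCograph S (G.induce S) :=
    ih S (Finite.card_subtype_lt ht) _ fun h => hG (h.map (SimpleGraph.Embedding.induce S))
  have hSc : IsCograph ↥Sᶜ (G.induce Sᶜ) :=
    ih _ (Finite.card_subtype_lt (not_not.mpr hs)) _
      fun h => hG (h.map (SimpleGraph.Embedding.induce _))
  rcases hcut with hno | hall
  · exact (hS.union hSc).iso (disjUnionInduceIso G S fun a ha b hb => hno a ha b ⟨trivial, hb⟩)
  · exact (hS.join hSc).iso (graphJoinInduceIso G S fun a ha b hb => hall a ha b ⟨trivial, hb⟩)

end Construction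

/-- A (finite, nonempty) graph is P4-free if and only if it is a cograph. -/
theorem stmt0 (V : Type) [Fintype V] [Nonempty V] (G : SimpleGraph V) :
    IsCograph V G ↔ ¬ HasInducedP4 G :=
  ⟨IsCograph.not_hasInducedP4, IsCograph.of_not_hasInducedP4⟩
end

section
/- Let G_{x,y} be the graph on vertex set A1 ∪ A2 ∪ B1 ∪ B2 ∪ {p,q,r,s,x,y,z} where A1, A2, B1, B2 are cliques of size n, with matching edges (a_{1,j}, b_{1,j}) and (a_{2,j}, b_{2,j}) for all j ∈ [n], q adjacent to all of A1, r adjacent to all of A2, x adjacent to all of B1, z adjacent to all of B2, edges (p,q), (r,s), (x,y), (y,z), and additional edges (a_{1,j1}, a_{2,j2}) when x_k = 0 and (b_{1,j1}, b_{2,j2}) when y_k = 0 for k = j1 + (j2−1)(n−1). Then every induced path on 11 vertices in G_{x,y} contains at most one vertex of A1 and at most one vertex of A2. -/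
/-- The vertex set of the `P11` lower-bound graph `G_{x,y}`: four groups of `n` vertices
`A1, A2, B1, B2` together with seven special vertices `p, q, r, s, x, y, z`. -/
inductive V11 (n : ℕ) : Type
  | A1 : Fin n → V11 n
  | A2 : Fin n → V11 n
  | B1 : Fin n → V11 n
  | B2 : Fin n → V11 n
  | p | q | r | s | x | y | z
  deriving DecidableEq

/-- The underlying relation of `G_{x,y}`: `A1, A2, B1, B2` are cliques; matching edges
`(a_{1,j}, b_{1,j})` and `(a_{2,j}, b_{2,j})`; `q` joined to all of `A1`, `r` to all of
`A2`, `x` to all of `B1`, `z` to all of `B2`; the edges `(p,q)`, `(r,s)`, `(x,y)`,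
`(y,z)`; and the shortcut edges `(a_{1,j1}, a_{2,j2})` when the bit `xs j1 j2` is `0`
and `(b_{1,j1}, b_{2,j2})` when the bit `ys j1 j2` is `0` (the bit strings
`x, y ∈ {0,1}^{n²}` are encoded as functions of the two indices). -/
def rel11 {n : ℕ} (xs ys : Fin n → Fin n → Bool) : V11 n → V11 n → Prop
  | .A1 _, .A1 _ => True
  | .A2 _, .A2 _ => True
  | .B1 _, .B1 _ => True
  | .B2 _, .B2 _ => True
  | .A1 j, .B1 k => j = k
  | .A2 j, .B2 k => j = k
  | .q, .A1 _ => True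
  | .r, .A2 _ => True
  | .x, .B1 _ => True
  | .z, .B2 _ => True
  | .p, .q => True
  | .r, .s => True
  | .x, .y => True
  | .y, .z => True
  | .A1 j1, .A2 j2 => xs j1 j2 = false
  | .B1 j1, .B2 j2 => ys j1 j2 = false
  | _, _ => False

/-- The `P11` lower-bound graph `G_{x,y}`. -/
def G11 {n : ℕ} (xs ys : Fin n → Fin n → Bool) : SimpleGraph (V11 n) :=
  SimpleGraph.fromRel (rel11 xs ys)

/-- `p` is an induced path on `k` vertices in `G`. -/
def IsInducedPath {V : Type} (G : SimpleGraph V) {k : ℕ} (p : Fin k → V) : Prop :=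
  Function.Injective p ∧
    ∀ i j : Fin k, G.Adj (p i) (p j) ↔ (i.val + 1 = j.val ∨ j.val + 1 = i.val)

/- ## Label abstraction -/

inductive L11 | A1 | A2 | B1 | B2 | p | q | r | s | x | y | z
  deriving DecidableEq

open L11 in
def lab {n : ℕ} : V11 n → L11
  | .A1 _ => A1 | .A2 _ => A2 | .B1 _ => B1 | .B2 _ => B2
  | .p => p | .q => q | .r => r | .s => s | .x => x | .y => y | .z => z

def allowedL : L11 → L11 → Bool
  | .A1,.A1 => true | .A2,.A2 => true | .B1,.B1=>true | .B2,.B2=>true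
  | .A1,.B1 => true | .B1,.A1 => true | .A2,.B2=>true | .B2,.A2=>true
  | .A1,.A2=>true | .A2,.A1=>true | .B1,.B2=>true | .B2,.B1=>true
  | .q,.A1=>true | .A1,.q=>true | .r,.A2=>true | .A2,.r=>true
  | .x,.B1=>true | .B1,.x=>true | .z,.B2=>true | .B2,.z=>true
  | .p,.q=>true | .q,.p=>true | .r,.s=>true | .s,.r=>true
  | .x,.y=>true | .y,.x=>true | .y,.z=>true | .z,.y=>true
  | _,_ => false

def forcedAux : L11 → L11 → Bool
  | .q,.A1=>true | .A1,.q=>true | .r,.A2=>true | .A2,.r=>true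
  | .x,.B1=>true | .B1,.x=>true | .z,.B2=>true | .B2,.z=>true
  | .p,.q=>true | .q,.p=>true | .r,.s=>true | .s,.r=>true
  | .x,.y=>true | .y,.x=>true | .y,.z=>true | .z,.y=>true
  | _,_=>false

def forcedL (a b : L11) : Bool := a == b || forcedAux a b

def goodStep (c : L11) : List L11 → Bool
  | [] => true
  | d :: rest => allowedL c d && rest.all (fun e => !forcedL c e)

def good : List L11 → Bool
  | [] => true
  | c :: w => goodStep c w && good w

def hasPair (t : L11) : List L11 → Bool
  | a :: b :: w => (a == t && b == t) || hasPair t (b :: w)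
  | _ => false

def allL : List L11 := [.A1,.A2,.B1,.B2,.p,.q,.r,.s,.x,.y,.z]

def search : Nat → List L11 → Bool
  | 0, w => !(hasPair .A1 w) && !(hasPair .A2 w)
  | k+1, w => allL.all fun c => !goodStep c w || search k (c :: w)

theorem search11 : search 11 [] = true := by decide

theorem mem_allL (c : L11) : c ∈ allL := by cases c <;> simp [allL]

theorem good_append (u w : List L11) (h : good (u ++ w) = true) : good w = true := by
  induction u with
  | nil => exact h
  | cons c u ih =>
    rw [List.cons_append, good, Bool.and_eq_true] at h
    exact ih h.2

theorem search_spec : ∀ (k : ℕ) (w : List L11), search k w = true →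
    ∀ v : List L11, v.length = k → good (v ++ w) = true →
    hasPair .A1 (v ++ w) = false ∧ hasPair .A2 (v ++ w) = false := by
  intro k
  induction k with
  | zero =>
    intro w hs v hv hg
    rw [List.length_eq_zero_iff] at hv
    subst hv
    rw [search, Bool.and_eq_true, Bool.not_eq_true', Bool.not_eq_true'] at hs
    simpa using hs
  | succ k ih =>
    intro w hs v hv hg
    rcases (List.eq_nil_or_concat v) with rfl | ⟨v', c, rfl⟩
    · simp at hv
    · rw [List.concat_eq_append] at hv hg ⊢
      have hco : (v' ++ [c]) ++ w = v' ++ (c :: w) := by simp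
      rw [hco] at hg ⊢
      have hgc : good (c :: w) = true := good_append _ _ hg
      rw [good, Bool.and_eq_true] at hgc
      have hstep : goodStep c w = true := hgc.1
      rw [search, List.all_eq_true] at hs
      have := hs c (mem_allL c)
      rw [hstep] at this
      simp at this
      have hlen : v'.length = k := by
        have := hv; simp at this; omega
      exact ih (c :: w) this v' hlen hg

theorem good_of : ∀ (l : List L11),
    (∀ i (h : i + 1 < l.length),
      allowedL (l.get ⟨i, Nat.lt_of_succ_lt h⟩) (l.get ⟨i+1, h⟩) = true) →
    (∀ i j (hi : i < l.length) (hj : j < l.length), i + 2 ≤ j →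
      forcedL (l.get ⟨i, hi⟩) (l.get ⟨j, hj⟩) = false) →
    good l = true := by
  intro l
  induction l with
  | nil => intro _ _; rfl
  | cons c t ih =>
    intro h1 h2
    rw [good, Bool.and_eq_true]
    constructor
    · cases t with
      | nil => rfl
      | cons d r =>
        rw [goodStep, Bool.and_eq_true]
        constructor
        · exact h1 0 (by simp)
        · rw [List.all_eq_true]
          intro e he
          obtain ⟨k, hk, rfl⟩ := List.mem_iff_get.mp he
          have : forcedL ((c :: d :: r).get ⟨0, by simp⟩)
              ((c :: d :: r).get ⟨k.val + 2, by simpa using Nat.add_lt_add_right k.isLt 2⟩) = false :=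
            h2 0 (k.val + 2) (by simp) (by simpa using Nat.add_lt_add_right k.isLt 2)
              (by omega)
          simpa using this
    · apply ih
      · intro i h
        exact h1 (i+1) (by simpa using Nat.succ_lt_succ h)
      · intro i j hi hj hij
        exact h2 (i+1) (j+1) (by simpa using Nat.succ_lt_succ hi)
          (by simpa using Nat.succ_lt_succ hj) (by omega)

theorem hasPair_of (t : L11) : ∀ (l : List L11) (i : ℕ) (h : i + 1 < l.length),
    l.get ⟨i, Nat.lt_of_succ_lt h⟩ = t → l.get ⟨i+1, h⟩ = t → hasPair t l = true := by
  intro l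
  induction l with
  | nil => intro i h; simp at h
  | cons a l ih =>
    intro i h h1 h2
    cases l with
    | nil => simp at h
    | cons b w =>
      rw [hasPair, Bool.or_eq_true]
      cases i with
      | zero =>
        left
        simp at h1 h2
        simp [h1, h2]
      | succ i =>
        right
        exact ih i (by simpa using h) (by simpa using h1) (by simpa using h2)

theorem adj_allowed {n : ℕ} (xs ys : Fin n → Fin n → Bool) (u v : V11 n)
    (h : (G11 xs ys).Adj u v) : allowedL (lab u) (lab v) = true := by
  rw [G11, SimpleGraph.fromRel_adj] at h
  cases u <;> cases v <;> simp_all [rel11, lab, allowedL]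

theorem forced_false {n : ℕ} (xs ys : Fin n → Fin n → Bool) (u v : V11 n)
    (hne : u ≠ v) (h : ¬ (G11 xs ys).Adj u v) : forcedL (lab u) (lab v) = false := by
  rw [G11, SimpleGraph.fromRel_adj] at h
  push_neg at h
  cases u <;> cases v <;> simp_all [rel11, lab, forcedL, forcedAux]


/-- Every induced path on 11 vertices in `G_{x,y}` contains at most one vertex of `A1`
and at most one vertex of `A2`. -/
theorem stmt8 {n : ℕ} (xs ys : Fin n → Fin n → Bool) (P : Fin 11 → V11 n)
    (hP : IsInducedPath (G11 xs ys) P) :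
    (∀ i j : Fin 11, ∀ a b : Fin n, P i = V11.A1 a → P j = V11.A1 b → i = j) ∧
      (∀ i j : Fin 11, ∀ a b : Fin n, P i = V11.A2 a → P j = V11.A2 b → i = j) := by
  obtain ⟨hinj, hadj⟩ := hP
  set w : List L11 := List.ofFn (fun i : Fin 11 => lab (P i)) with hw
  have hlen : w.length = 11 := by simp [hw]
  have hget : ∀ (i : ℕ) (h : i < w.length), w.get ⟨i, h⟩ = lab (P ⟨i, by omega⟩) := by
    intro i h
    exact List.get_ofFn (fun i : Fin 11 => lab (P i)) ⟨i, h⟩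
  have hgood : good w = true := by
    apply good_of
    · intro i h
      rw [hget, hget]
      apply adj_allowed
      exact (hadj _ _).2 (Or.inl rfl)
    · intro i j hi hj hij
      rw [hget, hget]
      apply forced_false
      · intro hEq
        have := hinj hEq
        simp [Fin.ext_iff] at this
        omega
      · intro hA
        have := (hadj _ _).1 hA
        simp at this
        omega
  have hmain := search_spec 11 [] search11 w (by simpa using hlen) (by simpa using hgood)
  rw [List.append_nil] at hmain
  have key : ∀ (t : L11), hasPair t w = false →
      ∀ (i j : Fin 11), (∀ m : Fin 11, P m = P i → lab (P m) = t) →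
      (∀ m : Fin 11, P m = P j → lab (P m) = t) →
      (G11 xs ys).Adj (P i) (P j) → False := by
    intro t ht i j hi hj hA
    have hcons := (hadj i j).1 hA
    have hiA : lab (P i) = t := hi i rfl
    have hjA : lab (P j) = t := hj j rfl
    rcases hcons with hc | hc
    · have : hasPair t w = true := by
        apply hasPair_of t w i.val (by omega)
        · rw [hget]; convert hiA
        · rw [hget]; rw [show (⟨i.val+1, by omega⟩ : Fin 11) = j from Fin.ext hc]; exact hjA
      rw [this] at ht; exact absurd ht (by simp)
    · have : hasPair t w = true := by
        apply hasPair_of t w j.val (by omega)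
        · rw [hget]; convert hjA
        · rw [hget]; rw [show (⟨j.val+1, by omega⟩ : Fin 11) = i from Fin.ext hc]; exact hiA
      rw [this] at ht; exact absurd ht (by simp)
  constructor
  · intro i j a b hi hj
    by_contra hij
    have hne : P i ≠ P j := fun h => hij (hinj h)
    have hA : (G11 xs ys).Adj (P i) (P j) := by
      rw [hi, hj] at hne ⊢
      exact ⟨hne, Or.inl (by rw [rel11]; trivial)⟩
    exact key L11.A1 hmain.1 i j
      (fun m hm => by rw [hm, hi]; rfl) (fun m hm => by rw [hm, hj]; rfl) hA
  · intro i j a b hi hj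
    by_contra hij
    have hne : P i ≠ P j := fun h => hij (hinj h)
    have hA : (G11 xs ys).Adj (P i) (P j) := by
      rw [hi, hj] at hne ⊢
      exact ⟨hne, Or.inl (by rw [rel11]; trivial)⟩
    exact key L11.A2 hmain.2 i j
      (fun m hm => by rw [hm, hi]; rfl) (fun m hm => by rw [hm, hj]; rfl) hA
end

section
/- In the graph G_{x,y} of the P11 lower-bound construction, the only induced paths on 11 vertices are of the form p, q, a_{1,i}, b_{1,i}, x, y, z, b_{2,j}, a_{2,j}, r, s for some i, j ∈ [n]; such a path exists if and only if there exists an index k = i + (j−1)(n−1) with x_k = y_k = 1 (i.e., neither shortcut edge (a_{1,i}, a_{2,j}) nor (b_{1,i}, b_{2,j}) is present). Consequently, G_{x,y} is P11-free if and only if the strings x and y are disjoint. -/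
/-- The canonical induced 11-path `p, q, a_{1,i}, b_{1,i}, x, y, z, b_{2,j}, a_{2,j}, r, s`. -/
def seq11 {n : ℕ} (i j : Fin n) : Fin 11 → V11 n :=
  ![V11.p, V11.q, V11.A1 i, V11.B1 i, V11.x, V11.y, V11.z,
    V11.B2 j, V11.A2 j, V11.r, V11.s]

inductive Cl : Type
  | a1 | a2 | b1 | b2 | cp | cq | cr | cs | cx | cy | cz
  deriving DecidableEq, Repr

def alw : Cl → Cl → Bool
  | .a1, .a1 => true | .a2, .a2 => true | .b1, .b1 => true | .b2, .b2 => true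
  | .cq, .a1 => true | .a1, .cq => true
  | .cr, .a2 => true | .a2, .cr => true
  | .cx, .b1 => true | .b1, .cx => true
  | .cz, .b2 => true | .b2, .cz => true
  | .cp, .cq => true | .cq, .cp => true
  | .cr, .cs => true | .cs, .cr => true
  | .cx, .cy => true | .cy, .cx => true
  | .cy, .cz => true | .cz, .cy => true
  | _, _ => false

def cnd : Cl → Cl → Bool
  | .a1, .b1 => true | .b1, .a1 => true
  | .a2, .b2 => true | .b2, .a2 => true
  | .a1, .a2 => true | .a2, .a1 => true
  | .b1, .b2 => true | .b2, .b1 => true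
  | _, _ => false

def nev (a b : Cl) : Bool := !(alw a b || cnd a b)

def isSpec : Cl → Bool
  | .a1 | .a2 | .b1 | .b2 => false
  | _ => true

def allCl : List Cl := [.a1, .a2, .b1, .b2, .cp, .cq, .cr, .cs, .cx, .cy, .cz]

def okCons (c : Cl) (l : List Cl) : Bool :=
  !(isSpec c && decide (c ∈ l)) &&
    match l with
    | [] => true
    | h :: t => !nev c h && t.all (fun d => !alw c d)

def stepS (S : List (List Cl)) : List (List Cl) :=
  S.flatMap fun l => (allCl.filter fun c => okCons c l).map fun c => c :: l

def searchN : ℕ → List (List Cl)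
  | 0 => [[]]
  | k+1 => stepS (searchN k)


theorem searchN_eleven : searchN 11 =
    [[.cs, .cr, .a2, .b2, .cz, .cy, .cx, .b1, .a1, .cq, .cp],
     [.cp, .cq, .a1, .b1, .cx, .cy, .cz, .b2, .a2, .cr, .cs]] := by decide

def validR : List Cl → Bool
  | [] => true
  | c :: l => okCons c l && validR l

lemma mem_allCl (c : Cl) : c ∈ allCl := by cases c <;> simp [allCl]

lemma mem_searchN : ∀ l : List Cl, validR l = true → l ∈ searchN l.length := by
  intro l
  induction l with
  | nil => intro _; simp [searchN]
  | cons c l ih =>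
    intro h
    simp only [validR, Bool.and_eq_true] at h
    have hl := ih h.2
    simp only [List.length_cons, searchN, stepS, List.mem_flatMap]
    exact ⟨l, hl, List.mem_map.2 ⟨c, List.mem_filter.2 ⟨mem_allCl c, h.1⟩, rfl⟩⟩

def revPref (g : ℕ → Cl) : ℕ → List Cl
  | 0 => []
  | k+1 => g k :: revPref g k

lemma length_revPref (g : ℕ → Cl) : ∀ k, (revPref g k).length = k := by
  intro k; induction k with
  | zero => rfl
  | succ k ih => simp [revPref, ih]

lemma mem_revPref (g : ℕ → Cl) (c : Cl) : ∀ k, c ∈ revPref g k ↔ ∃ m, m < k ∧ g m = c := by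
  intro k; induction k with
  | zero => simp [revPref]
  | succ k ih =>
    simp only [revPref, List.mem_cons, ih]
    constructor
    · rintro (rfl | ⟨m, hm, rfl⟩)
      · exact ⟨k, by omega, rfl⟩
      · exact ⟨m, by omega, rfl⟩
    · rintro ⟨m, hm, rfl⟩
      rcases Nat.lt_succ_iff_lt_or_eq.1 hm with h | rfl
      · exact Or.inr ⟨m, h, rfl⟩
      · exact Or.inl rfl

lemma validR_revPref (g : ℕ → Cl)
    (V1 : ∀ a b, a < b → b < 11 → isSpec (g b) = true → g a ≠ g b)
    (V2 : ∀ a, a + 1 < 11 → nev (g (a+1)) (g a) = false)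
    (V3 : ∀ a b, a + 1 < b → b < 11 → alw (g b) (g a) = false) :
    ∀ k, k ≤ 11 → validR (revPref g k) = true := by
  intro k
  induction k with
  | zero => intro _; rfl
  | succ k ih =>
    intro hk
    have hk' : k < 11 := hk
    simp only [revPref, validR, Bool.and_eq_true]
    refine ⟨?_, ih (by omega)⟩
    simp only [okCons, Bool.and_eq_true, Bool.not_eq_true']
    constructor
    · simp only [Bool.and_eq_false_iff, decide_eq_false_iff_not, mem_revPref]
      by_cases hs : isSpec (g k) = true
      · refine Or.inr ?_
        rintro ⟨m, hm, hgm⟩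
        exact V1 m k hm hk' hs hgm
      · exact Or.inl (by simpa using hs)
    · cases k with
      | zero => simp [revPref]
      | succ j =>
        simp only [revPref, Bool.and_eq_true, Bool.not_eq_true']
        refine ⟨V2 j hk', ?_⟩
        rw [List.all_eq_true]
        intro d hd
        rw [mem_revPref] at hd
        obtain ⟨m, hm, rfl⟩ := hd
        simp [V3 m (j+1) (by omega) hk']


def cls {n : ℕ} : V11 n → Cl
  | .A1 _ => .a1
  | .A2 _ => .a2
  | .B1 _ => .b1
  | .B2 _ => .b2
  | .p => .cp
  | .q => .cq
  | .r => .cr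
  | .s => .cs
  | .x => .cx
  | .y => .cy
  | .z => .cz

lemma adj_nev {n : ℕ} (xs ys : Fin n → Fin n → Bool) (u v : V11 n)
    (h : (G11 xs ys).Adj u v) : nev (cls u) (cls v) = false := by
  cases u <;> cases v <;> revert h <;>
    simp [G11, SimpleGraph.fromRel_adj, rel11, cls, nev, alw, cnd]

lemma alw_adj {n : ℕ} (xs ys : Fin n → Fin n → Bool) (u v : V11 n)
    (h : alw (cls u) (cls v) = true) (hne : u ≠ v) : (G11 xs ys).Adj u v := by
  cases u <;> cases v <;>
    simp_all [G11, SimpleGraph.fromRel_adj, rel11, cls, alw]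

lemma spec_eq {n : ℕ} (u v : V11 n) (hs : isSpec (cls v) = true)
    (he : cls u = cls v) : u = v := by
  cases u <;> cases v <;> simp_all [cls, isSpec]

lemma cls_a1 {n : ℕ} (v : V11 n) (h : cls v = .a1) : ∃ i, v = .A1 i := by
  cases v <;> simp_all [cls]
lemma cls_a2 {n : ℕ} (v : V11 n) (h : cls v = .a2) : ∃ i, v = .A2 i := by
  cases v <;> simp_all [cls]
lemma cls_b1 {n : ℕ} (v : V11 n) (h : cls v = .b1) : ∃ i, v = .B1 i := by
  cases v <;> simp_all [cls]
lemma cls_b2 {n : ℕ} (v : V11 n) (h : cls v = .b2) : ∃ i, v = .B2 i := by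
  cases v <;> simp_all [cls]
lemma cls_cp {n : ℕ} (v : V11 n) (h : cls v = .cp) : v = .p := by
  cases v <;> simp_all [cls]
lemma cls_cq {n : ℕ} (v : V11 n) (h : cls v = .cq) : v = .q := by
  cases v <;> simp_all [cls]
lemma cls_cr {n : ℕ} (v : V11 n) (h : cls v = .cr) : v = .r := by
  cases v <;> simp_all [cls]
lemma cls_cs {n : ℕ} (v : V11 n) (h : cls v = .cs) : v = .s := by
  cases v <;> simp_all [cls]
lemma cls_cx {n : ℕ} (v : V11 n) (h : cls v = .cx) : v = .x := by
  cases v <;> simp_all [cls]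
lemma cls_cy {n : ℕ} (v : V11 n) (h : cls v = .cy) : v = .y := by
  cases v <;> simp_all [cls]
lemma cls_cz {n : ℕ} (v : V11 n) (h : cls v = .cz) : v = .z := by
  cases v <;> simp_all [cls]

lemma classify {n : ℕ} (xs ys : Fin n → Fin n → Bool) (P : Fin 11 → V11 n)
    (h : IsInducedPath (G11 xs ys) P) :
    ∃ i j : Fin n, xs i j = true ∧ ys i j = true ∧
      (P = seq11 i j ∨ P = seq11 i j ∘ Fin.rev) := by
  obtain ⟨hinj, hadj⟩ := h
  set g : ℕ → Cl := fun m => if hm : m < 11 then cls (P ⟨m, hm⟩) else Cl.a1 with hg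
  have hgdef : ∀ (m : ℕ) (hm : m < 11), g m = cls (P ⟨m, hm⟩) := fun m hm => dif_pos hm
  have V1 : ∀ a b, a < b → b < 11 → isSpec (g b) = true → g a ≠ g b := by
    intro a b hab hb hs heq
    have ha : a < 11 := by omega
    rw [hgdef a ha, hgdef b hb] at heq
    rw [hgdef b hb] at hs
    have h2 := hinj (spec_eq _ _ hs heq)
    have : a = b := by simpa [Fin.mk.injEq] using h2
    omega
  have V2 : ∀ a, a + 1 < 11 → nev (g (a+1)) (g a) = false := by
    intro a ha
    rw [hgdef (a+1) ha, hgdef a (by omega)]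
    apply adj_nev
    rw [hadj]
    exact Or.inr rfl
  have V3 : ∀ a b, a + 1 < b → b < 11 → alw (g b) (g a) = false := by
    intro a b hab hb
    have ha : a < 11 := by omega
    rw [hgdef b hb, hgdef a ha]
    by_contra hal
    rw [Bool.not_eq_false] at hal
    have hne : P ⟨b, hb⟩ ≠ P ⟨a, ha⟩ := by
      intro he
      have := hinj he
      simp only [Fin.mk.injEq] at this
      omega
    have := (hadj _ _).1 (alw_adj xs ys _ _ hal hne)
    simp only [Fin.mk.injEq] at this
    omega
  have hv := validR_revPref g V1 V2 V3 11 le_rfl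
  have hmem := mem_searchN _ hv
  rw [length_revPref] at hmem
  rw [searchN_eleven] at hmem
  have hrev : revPref g 11 = [g 10, g 9, g 8, g 7, g 6, g 5, g 4, g 3, g 2, g 1, g 0] := rfl
  rw [hrev] at hmem
  simp only [List.mem_cons, List.mem_singleton, List.not_mem_nil, or_false,
    List.cons.injEq, and_true] at hmem
  have hno : ∀ (a b : Fin 11), ¬(a.val + 1 = b.val ∨ b.val + 1 = a.val) →
      ¬ (G11 xs ys).Adj (P a) (P b) := by
    intro a b hc hA
    exact hc ((hadj a b).1 hA)
  rcases hmem with ⟨h10, h9, h8, h7, h6, h5, h4, h3, h2, h1, h0⟩ |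
    ⟨h10, h9, h8, h7, h6, h5, h4, h3, h2, h1, h0⟩
  · -- forward: g0=cp,...,g10=cs
    rw [hgdef 10 (by omega)] at h10
    rw [hgdef 9 (by omega)] at h9
    rw [hgdef 8 (by omega)] at h8
    rw [hgdef 7 (by omega)] at h7
    rw [hgdef 6 (by omega)] at h6
    rw [hgdef 5 (by omega)] at h5
    rw [hgdef 4 (by omega)] at h4
    rw [hgdef 3 (by omega)] at h3
    rw [hgdef 2 (by omega)] at h2
    rw [hgdef 1 (by omega)] at h1
    rw [hgdef 0 (by omega)] at h0
    have e0 := cls_cp _ h0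
    have e1 := cls_cq _ h1
    obtain ⟨i, e2⟩ := cls_a1 _ h2
    obtain ⟨k, e3⟩ := cls_b1 _ h3
    have e4 := cls_cx _ h4
    have e5 := cls_cy _ h5
    have e6 := cls_cz _ h6
    obtain ⟨l, e7⟩ := cls_b2 _ h7
    obtain ⟨j, e8⟩ := cls_a2 _ h8
    have e9 := cls_cr _ h9
    have e10 := cls_cs _ h10
    have hik : i = k := by
      have hA := (hadj ⟨2, by omega⟩ ⟨3, by omega⟩).2 (Or.inl rfl)
      rw [e2, e3] at hA
      simpa [G11, SimpleGraph.fromRel_adj, rel11] using hA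
    have hjl : j = l := by
      have hA := (hadj ⟨7, by omega⟩ ⟨8, by omega⟩).2 (Or.inl rfl)
      rw [e7, e8] at hA
      simpa [G11, SimpleGraph.fromRel_adj, rel11] using hA
    subst hik hjl
    have hxs : xs i j = true := by
      have hA := hno ⟨2, by omega⟩ ⟨8, by omega⟩ (by simp)
      rw [e2, e8] at hA
      simpa [G11, SimpleGraph.fromRel_adj, rel11] using hA
    have hys : ys i j = true := by
      have hA := hno ⟨3, by omega⟩ ⟨7, by omega⟩ (by simp)
      rw [e3, e7] at hA
      simpa [G11, SimpleGraph.fromRel_adj, rel11] using hA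
    refine ⟨i, j, hxs, hys, Or.inl ?_⟩
    funext m
    obtain ⟨mv, hmv⟩ := m
    interval_cases mv
    · exact e0.trans rfl
    · exact e1.trans rfl
    · exact e2.trans rfl
    · exact e3.trans rfl
    · exact e4.trans rfl
    · exact e5.trans rfl
    · exact e6.trans rfl
    · exact e7.trans rfl
    · exact e8.trans rfl
    · exact e9.trans rfl
    · exact e10.trans rfl
  · -- reverse: g0=cs,...,g10=cp
    rw [hgdef 10 (by omega)] at h10
    rw [hgdef 9 (by omega)] at h9
    rw [hgdef 8 (by omega)] at h8
    rw [hgdef 7 (by omega)] at h7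
    rw [hgdef 6 (by omega)] at h6
    rw [hgdef 5 (by omega)] at h5
    rw [hgdef 4 (by omega)] at h4
    rw [hgdef 3 (by omega)] at h3
    rw [hgdef 2 (by omega)] at h2
    rw [hgdef 1 (by omega)] at h1
    rw [hgdef 0 (by omega)] at h0
    have e0 := cls_cs _ h0
    have e1 := cls_cr _ h1
    obtain ⟨j, e2⟩ := cls_a2 _ h2
    obtain ⟨l, e3⟩ := cls_b2 _ h3
    have e4 := cls_cz _ h4
    have e5 := cls_cy _ h5
    have e6 := cls_cx _ h6
    obtain ⟨k, e7⟩ := cls_b1 _ h7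
    obtain ⟨i, e8⟩ := cls_a1 _ h8
    have e9 := cls_cq _ h9
    have e10 := cls_cp _ h10
    have hjl : j = l := by
      have hA := (hadj ⟨2, by omega⟩ ⟨3, by omega⟩).2 (Or.inl rfl)
      rw [e2, e3] at hA
      simpa [G11, SimpleGraph.fromRel_adj, rel11] using hA
    have hik : i = k := by
      have hA := (hadj ⟨7, by omega⟩ ⟨8, by omega⟩).2 (Or.inl rfl)
      rw [e7, e8] at hA
      simpa [G11, SimpleGraph.fromRel_adj, rel11] using hA
    subst hik hjl
    have hxs : xs i j = true := by
      have hA := hno ⟨2, by omega⟩ ⟨8, by omega⟩ (by simp)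
      rw [e2, e8] at hA
      simpa [G11, SimpleGraph.fromRel_adj, rel11] using hA
    have hys : ys i j = true := by
      have hA := hno ⟨3, by omega⟩ ⟨7, by omega⟩ (by simp)
      rw [e3, e7] at hA
      simpa [G11, SimpleGraph.fromRel_adj, rel11] using hA
    refine ⟨i, j, hxs, hys, Or.inr ?_⟩
    funext m
    obtain ⟨mv, hmv⟩ := m
    interval_cases mv
    · exact e0.trans rfl
    · exact e1.trans rfl
    · exact e2.trans rfl
    · exact e3.trans rfl
    · exact e4.trans rfl
    · exact e5.trans rfl
    · exact e6.trans rfl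
    · exact e7.trans rfl
    · exact e8.trans rfl
    · exact e9.trans rfl
    · exact e10.trans rfl

lemma seq11_mk0 {n : ℕ} (i j : Fin n) (h : (0:ℕ) < 11) : seq11 i j ⟨0, h⟩ = V11.p := rfl
lemma seq11_mk1 {n : ℕ} (i j : Fin n) (h : (1:ℕ) < 11) : seq11 i j ⟨1, h⟩ = V11.q := rfl
lemma seq11_mk2 {n : ℕ} (i j : Fin n) (h : (2:ℕ) < 11) : seq11 i j ⟨2, h⟩ = V11.A1 i := rfl
lemma seq11_mk3 {n : ℕ} (i j : Fin n) (h : (3:ℕ) < 11) : seq11 i j ⟨3, h⟩ = V11.B1 i := rfl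
lemma seq11_mk4 {n : ℕ} (i j : Fin n) (h : (4:ℕ) < 11) : seq11 i j ⟨4, h⟩ = V11.x := rfl
lemma seq11_mk5 {n : ℕ} (i j : Fin n) (h : (5:ℕ) < 11) : seq11 i j ⟨5, h⟩ = V11.y := rfl
lemma seq11_mk6 {n : ℕ} (i j : Fin n) (h : (6:ℕ) < 11) : seq11 i j ⟨6, h⟩ = V11.z := rfl
lemma seq11_mk7 {n : ℕ} (i j : Fin n) (h : (7:ℕ) < 11) : seq11 i j ⟨7, h⟩ = V11.B2 j := rfl
lemma seq11_mk8 {n : ℕ} (i j : Fin n) (h : (8:ℕ) < 11) : seq11 i j ⟨8, h⟩ = V11.A2 j := rfl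
lemma seq11_mk9 {n : ℕ} (i j : Fin n) (h : (9:ℕ) < 11) : seq11 i j ⟨9, h⟩ = V11.r := rfl
lemma seq11_mk10 {n : ℕ} (i j : Fin n) (h : (10:ℕ) < 11) : seq11 i j ⟨10, h⟩ = V11.s := rfl

lemma seq11_app0 {n : ℕ} (i j : Fin n) : seq11 i j 0 = V11.p := rfl
lemma seq11_app1 {n : ℕ} (i j : Fin n) : seq11 i j 1 = V11.q := rfl
lemma seq11_app2 {n : ℕ} (i j : Fin n) : seq11 i j 2 = V11.A1 i := rfl
lemma seq11_app3 {n : ℕ} (i j : Fin n) : seq11 i j 3 = V11.B1 i := rfl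
lemma seq11_app4 {n : ℕ} (i j : Fin n) : seq11 i j 4 = V11.x := rfl
lemma seq11_app5 {n : ℕ} (i j : Fin n) : seq11 i j 5 = V11.y := rfl
lemma seq11_app6 {n : ℕ} (i j : Fin n) : seq11 i j 6 = V11.z := rfl
lemma seq11_app7 {n : ℕ} (i j : Fin n) : seq11 i j 7 = V11.B2 j := rfl
lemma seq11_app8 {n : ℕ} (i j : Fin n) : seq11 i j 8 = V11.A2 j := rfl
lemma seq11_app9 {n : ℕ} (i j : Fin n) : seq11 i j 9 = V11.r := rfl
lemma seq11_app10 {n : ℕ} (i j : Fin n) : seq11 i j 10 = V11.s := rfl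

set_option maxHeartbeats 3000000 in
lemma seq11_path {n : ℕ} (xs ys : Fin n → Fin n → Bool) (i j : Fin n)
    (hx : xs i j = true) (hy : ys i j = true) :
    IsInducedPath (G11 xs ys) (seq11 i j) := by
  constructor
  · intro a b
    obtain ⟨av, ha⟩ := a
    obtain ⟨bv, hb⟩ := b
    interval_cases av <;> interval_cases bv <;> intro hab <;>
      first
        | rfl
        | exact V11.noConfusion rfl (heq_of_eq hab)
  · intro a b
    obtain ⟨av, ha⟩ := a
    obtain ⟨bv, hb⟩ := b
    interval_cases av <;> interval_cases bv <;>
      simp [seq11_app0, seq11_app1, seq11_app2, seq11_app3, seq11_app4, seq11_app5,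
        seq11_app6, seq11_app7, seq11_app8, seq11_app9, seq11_app10,
        G11, SimpleGraph.fromRel_adj, rel11, hx, hy]

/-- The only induced paths on 11 vertices in `G_{x,y}` are (up to reversal) of the form
`p, q, a_{1,i}, b_{1,i}, x, y, z, b_{2,j}, a_{2,j}, r, s`; such a path exists exactly
when `xs i j = ys i j = 1` for some index pair; consequently `G_{x,y}` is `P11`-free iff
the strings `x` and `y` are disjoint. -/
theorem stmt9 {n : ℕ} (xs ys : Fin n → Fin n → Bool) :
    (∀ P : Fin 11 → V11 n, IsInducedPath (G11 xs ys) P →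
      ∃ i j : Fin n, xs i j = true ∧ ys i j = true ∧
        (P = seq11 i j ∨ P = seq11 i j ∘ Fin.rev)) ∧
    ((∃ P : Fin 11 → V11 n, IsInducedPath (G11 xs ys) P) ↔
      ∃ i j : Fin n, xs i j = true ∧ ys i j = true) ∧
    ((¬ ∃ P : Fin 11 → V11 n, IsInducedPath (G11 xs ys) P) ↔
      ∀ i j : Fin n, ¬(xs i j = true ∧ ys i j = true)) := by
  
  have hcls : ∀ P : Fin 11 → V11 n, IsInducedPath (G11 xs ys) P →
      ∃ i j : Fin n, xs i j = true ∧ ys i j = true ∧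
        (P = seq11 i j ∨ P = seq11 i j ∘ Fin.rev) := fun P hP => classify xs ys P hP
  refine ⟨hcls, ?_, ?_⟩
  · constructor
    · rintro ⟨P, hP⟩
      obtain ⟨i, j, hx, hy, _⟩ := hcls P hP
      exact ⟨i, j, hx, hy⟩
    · rintro ⟨i, j, hx, hy⟩
      exact ⟨seq11 i j, seq11_path xs ys i j hx hy⟩
  · constructor
    · intro hn i j hij
      exact hn ⟨seq11 i j, seq11_path xs ys i j hij.1 hij.2⟩
    · rintro hall ⟨P, hP⟩
      obtain ⟨i, j, hx, hy, _⟩ := hcls P hP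
      exact hall i j ⟨hx, hy⟩
end

section
/- Let G_{x,y} be the ordered-P5 lower-bound graph: vertex sets A1, A2, A5 (colored 1, 2, 5) and B3, B4 (colored 3, 4), each of size n, with fixed edges (a_{5,j}, b_{4,j}) and (a_{2,j}, b_{3,j}) for all j ∈ [n], edges (a_{1,j}, a_{5,k}) for all distinct j, k ∈ [n], plus edge (a_{1,j1}, a_{2,j2}) iff x_k = 1 and edge (b_{4,j1}, b_{3,j2}) iff y_k = 1, where k = j1 + j2(n−1). Then G_{x,y} contains an induced path p1, p2, p3, p4, p5 with p_i colored i if and only if there exists an index k with x_k = y_k = 1. -/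
/-- The vertex set of the ordered-`P5` lower-bound graph: groups `A1, A2, A5` (colored
`1, 2, 5`) and `B3, B4` (colored `3, 4`), each of size `n`. -/
inductive VO (n : ℕ) : Type
  | A1 : Fin n → VO n
  | A2 : Fin n → VO n
  | A5 : Fin n → VO n
  | B3 : Fin n → VO n
  | B4 : Fin n → VO n
  deriving DecidableEq

/-- The color of each vertex: vertices of `A_i` have color `i` and vertices of `B_i`
have color `i`. -/
def VO.color {n : ℕ} : VO n → ℕ
  | .A1 _ => 1
  | .A2 _ => 2
  | .B3 _ => 3
  | .B4 _ => 4
  | .A5 _ => 5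

/-- The underlying relation of the ordered-`P5` lower-bound graph `G_{x,y}`: fixed edges
`(a_{5,j}, b_{4,j})` and `(a_{2,j}, b_{3,j})` for all `j`, edges `(a_{1,j}, a_{5,k})`
for all distinct `j, k`, plus the edge `(a_{1,j1}, a_{2,j2})` iff `xs j1 j2 = 1` and the
edge `(b_{4,j1}, b_{3,j2})` iff `ys j1 j2 = 1` (bit strings `x, y ∈ {0,1}^{n²}` encoded
as functions of the two indices). -/
def relO {n : ℕ} (xs ys : Fin n → Fin n → Bool) : VO n → VO n → Prop
  | .A5 j, .B4 k => j = k
  | .A2 j, .B3 k => j = k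
  | .A1 j, .A5 k => j ≠ k
  | .A1 j1, .A2 j2 => xs j1 j2 = true
  | .B4 j1, .B3 j2 => ys j1 j2 = true
  | _, _ => False

/-- The ordered-`P5` lower-bound graph `G_{x,y}`. -/
def GO {n : ℕ} (xs ys : Fin n → Fin n → Bool) : SimpleGraph (VO n) :=
  SimpleGraph.fromRel (relO xs ys)

/-- `p` is an ordered induced path on 5 vertices: the vertices are distinct, adjacency
holds exactly between consecutive vertices, and the `i`-th vertex has color `i`. -/
def IsOrderedP5 {n : ℕ} (G : SimpleGraph (VO n)) (p : Fin 5 → VO n) : Prop :=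
  Function.Injective p ∧
    (∀ i j : Fin 5, G.Adj (p i) (p j) ↔ (i.val + 1 = j.val ∨ j.val + 1 = i.val)) ∧
    ∀ i : Fin 5, (p i).color = i.val + 1

/-- `G_{x,y}` contains an ordered induced `P5` if and only if there is an index pair
with `xs j1 j2 = ys j1 j2 = 1`. -/
theorem stmt12 {n : ℕ} (xs ys : Fin n → Fin n → Bool) :
    (∃ p : Fin 5 → VO n, IsOrderedP5 (GO xs ys) p) ↔
      ∃ j1 j2 : Fin n, xs j1 j2 = true ∧ ys j1 j2 = true := by
  constructor
  · rintro ⟨p, hinj, hadj, hcol⟩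
    have v0 : ((0 : Fin 5) : ℕ) = 0 := rfl
    have v1 : ((1 : Fin 5) : ℕ) = 1 := rfl
    have v2 : ((2 : Fin 5) : ℕ) = 2 := rfl
    have v3 : ((3 : Fin 5) : ℕ) = 3 := rfl
    have v4 : ((4 : Fin 5) : ℕ) = 4 := rfl
    obtain ⟨j1, h0⟩ : ∃ j, p 0 = VO.A1 j := by
      have := hcol 0; cases h : p 0 <;> rw [h] at this <;>
        simp [VO.color, v0] at this ⊢
    obtain ⟨j2, h1⟩ : ∃ j, p 1 = VO.A2 j := by
      have := hcol 1; cases h : p 1 <;> rw [h] at this <;>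
        simp [VO.color, v1] at this ⊢
    obtain ⟨j3, h2⟩ : ∃ j, p 2 = VO.B3 j := by
      have := hcol 2; cases h : p 2 <;> rw [h] at this <;>
        simp [VO.color, v2] at this ⊢
    obtain ⟨j4, h3⟩ : ∃ j, p 3 = VO.B4 j := by
      have := hcol 3; cases h : p 3 <;> rw [h] at this <;>
        simp [VO.color, v3] at this ⊢
    obtain ⟨j5, h4⟩ : ∃ j, p 4 = VO.A5 j := by
      have := hcol 4; cases h : p 4 <;> rw [h] at this <;>
        simp [VO.color, v4] at this ⊢
    have e01 : xs j1 j2 = true := by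
      have := (hadj 0 1).2 (by decide)
      rw [h0, h1] at this
      simpa [GO, SimpleGraph.fromRel_adj, relO] using this
    have e12 : j2 = j3 := by
      have := (hadj 1 2).2 (by decide)
      rw [h1, h2] at this
      simpa [GO, SimpleGraph.fromRel_adj, relO] using this
    have e32 : ys j4 j3 = true := by
      have := (hadj 3 2).2 (by decide)
      rw [h3, h2] at this
      simpa [GO, SimpleGraph.fromRel_adj, relO] using this
    have e43 : j5 = j4 := by
      have := (hadj 4 3).2 (by decide)
      rw [h4, h3] at this
      simpa [GO, SimpleGraph.fromRel_adj, relO] using this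
    have e04 : j1 = j5 := by
      by_contra hne
      have hA : (GO xs ys).Adj (p 0) (p 4) := by
        rw [h0, h4]
        simp [GO, SimpleGraph.fromRel_adj, relO, hne]
      exact absurd ((hadj 0 4).1 hA) (by decide)
    exact ⟨j1, j2, e01, by rw [e04, e43, e12]; exact e32⟩
  · rintro ⟨j1, j2, hx, hy⟩
    refine ⟨![VO.A1 j1, VO.A2 j2, VO.B3 j2, VO.B4 j1, VO.A5 j1], ?_, ?_, ?_⟩
    · intro a b hab
      fin_cases a <;> fin_cases b <;> simp_all
    · intro i j
      fin_cases i <;> fin_cases j <;>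
        simp [GO, SimpleGraph.fromRel_adj, relO, hx, hy]
    · intro i
      fin_cases i <;> rfl
end

section
/- In the ordered-P5 lower-bound graph G_{x,y}, any induced path p1,...,p5 with p_i colored i must have the form p1 = a_{1,j1}, p2 = a_{2,j2}, p3 = b_{3,j2}, p4 = b_{4,j1}, p5 = a_{5,j1} for some j1, j2 ∈ [n]; in particular p4 and p5 share the same index j1, because every color-1 vertex a_{1,j} with j ≠ j1 is adjacent to a_{5,j1} and hence cannot be the endpoint p1 of the induced path. -/
/-- Any ordered induced `P5` in `G_{x,y}` must have the form
`a_{1,j1}, a_{2,j2}, b_{3,j2}, b_{4,j1}, a_{5,j1}` for some `j1, j2`. -/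
theorem stmt13 {n : ℕ} (xs ys : Fin n → Fin n → Bool) (p : Fin 5 → VO n)
    (hp : IsOrderedP5 (GO xs ys) p) :
    ∃ j1 j2 : Fin n,
      p = ![VO.A1 j1, VO.A2 j2, VO.B3 j2, VO.B4 j1, VO.A5 j1] := by
  obtain ⟨hinj, hadj, hcol⟩ := hp
  obtain ⟨j1, h0⟩ : ∃ j, p 0 = VO.A1 j := by
    have := hcol 0; cases h : p 0 <;> rw [h] at this <;> simp [VO.color] at this <;> first | exact ⟨_, rfl⟩ | exact absurd this (by decide)
  obtain ⟨j2, h1⟩ : ∃ j, p 1 = VO.A2 j := by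
    have := hcol 1; cases h : p 1 <;> rw [h] at this <;> simp [VO.color] at this <;> first | exact ⟨_, rfl⟩ | exact absurd this (by decide)
  obtain ⟨j3, h2⟩ : ∃ j, p 2 = VO.B3 j := by
    have := hcol 2; cases h : p 2 <;> rw [h] at this <;> simp [VO.color] at this <;> first | exact ⟨_, rfl⟩ | exact absurd this (by decide)
  obtain ⟨j4, h3⟩ : ∃ j, p 3 = VO.B4 j := by
    have := hcol 3; cases h : p 3 <;> rw [h] at this <;> simp [VO.color] at this <;> first | exact ⟨_, rfl⟩ | exact absurd this (by decide)
  obtain ⟨j5, h4⟩ : ∃ j, p 4 = VO.A5 j := by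
    have := hcol 4; cases h : p 4 <;> rw [h] at this <;> simp [VO.color] at this <;> first | exact ⟨_, rfl⟩ | exact absurd this (by decide)
  have e12 : j2 = j3 := by
    have := (hadj 1 2).mpr (by left; rfl)
    rw [h1, h2] at this
    simpa [GO, SimpleGraph.fromRel_adj, relO] using this
  have e34 : j4 = j5 := by
    have := (hadj 3 4).mpr (by left; rfl)
    rw [h3, h4] at this
    exact (by simpa [GO, SimpleGraph.fromRel_adj, relO] using this : j5 = j4).symm
  have e04 : j1 = j5 := by
    by_contra hne
    have : ¬ (GO xs ys).Adj (p 0) (p 4) := by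
      rw [hadj]; decide
    rw [h0, h4] at this
    exact this (by simp [GO, SimpleGraph.fromRel_adj, relO, hne])
  refine ⟨j1, j2, ?_⟩
  funext i
  fin_cases i <;> simp_all
end

section
/- Let G be a graph of diameter 3 with a designated vertex r, let V_i be the set of vertices at distance i from r (i = 1,2,3), and suppose an edge (u,v) with u, v ∈ V_2 satisfies: (Property 1) N(u) ∩ V1 = N(v) ∩ V1; (Property 3) (N(u) ∪ N(v)) ∩ V3 = ∅; (Property 4) for every w ∈ (N(u) ∪ N(v)) ∩ V2, N(u) ∩ V1 ⊆ N(w). If an induced path p1, p2, p3, p4, p5 on 5 vertices satisfies (p2, p3) = (u, v) with p2, p3 as the middle-adjacent edge, then p1, p4 ∈ V2 and any vertex in N(p2) ∩ N(p3) ∩ V1 is adjacent to both p1 and p4. -/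
/-- In a connected graph of diameter 3 with distance classes `V_i` from `r`, if an edge
`(u, v)` with `u, v ∈ V2` satisfies Property 1 (`N(u) ∩ V1 = N(v) ∩ V1`), Property 3
(`(N(u) ∪ N(v)) ∩ V3 = ∅`) and Property 4 (every `w ∈ (N(u) ∪ N(v)) ∩ V2` satisfies
`N(u) ∩ V1 ⊆ N(w)`), then for any induced path `p1, …, p5` with `(p2, p3) = (u, v)` we
have `p1, p4 ∈ V2`, and every vertex of `N(u) ∩ N(v) ∩ V1` is adjacent to both `p1`
and `p4`. -/
theorem stmt14 {V : Type} (G : SimpleGraph V) (r : V) (hconn : G.Connected)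
    (hdiam : ∀ a b : V, G.dist a b ≤ 3)
    (u v : V) (hu : G.dist r u = 2) (hv : G.dist r v = 2) (huv : G.Adj u v)
    (h1 : ∀ w : V, G.dist r w = 1 → (G.Adj u w ↔ G.Adj v w))
    (h3 : ∀ w : V, (G.Adj u w ∨ G.Adj v w) → G.dist r w ≠ 3)
    (h4 : ∀ w : V, (G.Adj u w ∨ G.Adj v w) → G.dist r w = 2 →
      ∀ t : V, G.Adj u t → G.dist r t = 1 → G.Adj w t)
    (p : Fin 5 → V) (hp : IsInducedPath G p) (hp2 : p 1 = u) (hp3 : p 2 = v) :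
    G.dist r (p 0) = 2 ∧ G.dist r (p 3) = 2 ∧
      ∀ w : V, G.Adj u w → G.Adj v w → G.dist r w = 1 →
        G.Adj w (p 0) ∧ G.Adj w (p 3) := by
  obtain ⟨hinj, hadj⟩ := hp
  have hA01 : G.Adj (p 0) u := hp2 ▸ (hadj 0 1).mpr (by decide)
  have hnA02 : ¬ G.Adj (p 0) v := hp3 ▸ fun h => by
    have := (hadj 0 2).mp h; omega
  have hA23 : G.Adj v (p 3) := hp3 ▸ (hadj 2 3).mpr (by decide)
  have hnA13 : ¬ G.Adj u (p 3) := hp2 ▸ fun h => by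
    have := (hadj 1 3).mp h; omega
  -- generic distance lemma
  have key : ∀ x : V, (G.Adj u x ∨ G.Adj v x) → ¬ (G.Adj u x ∧ G.Adj v x) →
      G.dist r x = 2 := by
    intro x hx hnboth
    have h3' := h3 x hx
    have hle := hdiam r x
    have hne0 : G.dist r x ≠ 0 := by
      intro h0
      have hxr : x = r := (hconn.dist_eq_zero_iff.mp h0).symm
      rcases hx with h | h
      · have h' : G.Adj r u := hxr ▸ h.symm
        have : G.dist r u ≤ 1 := by simpa using G.dist_le h'.toWalk
        omega
      · have h' : G.Adj r v := hxr ▸ h.symm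
        have : G.dist r v ≤ 1 := by simpa using G.dist_le h'.toWalk
        omega
    have hne1 : G.dist r x ≠ 1 := by
      intro h1'
      have := h1 x h1'
      rcases hx with h | h
      · exact hnboth ⟨h, this.mp h⟩
      · exact hnboth ⟨this.mpr h, h⟩
    omega
  have hd0 : G.dist r (p 0) = 2 :=
    key (p 0) (Or.inl hA01.symm) (fun h => hnA02 (h.2.symm))
  have hd3 : G.dist r (p 3) = 2 :=
    key (p 3) (Or.inr hA23) (fun h => hnA13 h.1)
  refine ⟨hd0, hd3, fun w hwu hwv hw1 => ?_⟩
  constructor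
  · exact ((h4 (p 0) (Or.inl hA01.symm) hd0 w hwu hw1)).symm
  · exact ((h4 (p 3) (Or.inr hA23) hd3 w hwu hw1)).symm
end

section
/- Let G be a graph, r a vertex, and V_i the distance classes from r in a graph of diameter 3. Suppose every edge (u,v) with both endpoints in V3 satisfies N(u) ∩ V2 = N(v) ∩ V2. Then every induced path on 5 vertices in G that uses at least one edge with both endpoints in V3 has all five of its vertices in V3, and consequently some vertex of V2 is adjacent to all five path vertices. -/
/-- In a connected graph of diameter 3 with distance classes `V_i` from `r`, if every
edge with both endpoints in `V3` satisfies `N(u) ∩ V2 = N(v) ∩ V2`, then every induced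
path on 5 vertices using at least one `V3`-`V3` edge has all five vertices in `V3`, and
some vertex of `V2` is adjacent to all five path vertices. -/
theorem stmt15 {V : Type} (G : SimpleGraph V) (r : V) (hconn : G.Connected)
    (hdiam : ∀ a b : V, G.dist a b ≤ 3)
    (h : ∀ u v : V, G.Adj u v → G.dist r u = 3 → G.dist r v = 3 →
      ∀ w : V, G.dist r w = 2 → (G.Adj u w ↔ G.Adj v w))
    (p : Fin 5 → V) (hp : IsInducedPath G p)
    (hedge : ∃ i : Fin 4, G.dist r (p i.castSucc) = 3 ∧ G.dist r (p i.succ) = 3) :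
    (∀ i : Fin 5, G.dist r (p i) = 3) ∧
      ∃ w : V, G.dist r w = 2 ∧ ∀ i : Fin 5, G.Adj w (p i) := by
  classical
  -- every vertex at distance 3 has a neighbor at distance 2
  have key : ∀ x : V, G.dist r x = 3 → ∃ w, G.Adj x w ∧ G.dist r w = 2 := by
    intro x hx
    obtain ⟨q, hq⟩ := hconn.exists_walk_length_eq_dist x r
    cases q with
    | nil => rw [SimpleGraph.dist_self] at hx; omega
    | @cons _ w _ hadj q1 =>
      refine ⟨w, hadj, ?_⟩
      have hlen : q1.length + 1 = G.dist x r := hq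
      have hxr : G.dist x r = 3 := by rw [SimpleGraph.dist_comm]; exact hx
      have h1 : G.dist w r ≤ 2 := by
        have := SimpleGraph.dist_le q1
        omega
      have h1' : G.dist r w ≤ 2 := by rwa [SimpleGraph.dist_comm]
      have h3 : G.dist w x = 1 := SimpleGraph.dist_eq_one_iff_adj.mpr hadj.symm
      have h2 : G.dist r x ≤ G.dist r w + G.dist w x := hconn.dist_triangle
      omega
  -- propagation step
  have step : ∀ a b c : V, G.Adj a b → G.Adj b c → ¬ G.Adj a c →
      G.dist r a = 3 → G.dist r b = 3 → G.dist r c = 3 := by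
    intro a b c hab hbc hac ha hb
    have h1 : G.dist r c ≤ 3 := hdiam r c
    have h2 : G.dist r b ≤ G.dist r c + G.dist c b := hconn.dist_triangle
    have h3 : G.dist c b = 1 := SimpleGraph.dist_eq_one_iff_adj.mpr hbc.symm
    have h4 : G.dist r c = 2 ∨ G.dist r c = 3 := by omega
    rcases h4 with h4 | h4
    · exact absurd ((h a b hab ha hb c h4).mpr hbc) hac
    · exact h4
  have adj : ∀ i j : Fin 5, i.val + 1 = j.val → G.Adj (p i) (p j) :=
    fun i j hij => (hp.2 i j).mpr (Or.inl hij)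
  have a01 : G.Adj (p 0) (p 1) := adj 0 1 rfl
  have a12 : G.Adj (p 1) (p 2) := adj 1 2 rfl
  have a23 : G.Adj (p 2) (p 3) := adj 2 3 rfl
  have a34 : G.Adj (p 3) (p 4) := adj 3 4 rfl
  have nadj : ∀ i j : Fin 5, i.val + 2 = j.val → ¬ G.Adj (p i) (p j) := by
    intro i j hij hadj
    rcases (hp.2 i j).mp hadj with hh | hh <;> omega
  have n02 : ¬ G.Adj (p 0) (p 2) := nadj 0 2 rfl
  have n13 : ¬ G.Adj (p 1) (p 3) := nadj 1 3 rfl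
  have n24 : ¬ G.Adj (p 2) (p 4) := nadj 2 4 rfl
  have n20 : ¬ G.Adj (p 2) (p 0) := fun hh => n02 hh.symm
  have n31 : ¬ G.Adj (p 3) (p 1) := fun hh => n13 hh.symm
  have n42 : ¬ G.Adj (p 4) (p 2) := fun hh => n24 hh.symm
  -- all five vertices are at distance 3
  have hall : ∀ i : Fin 5, G.dist r (p i) = 3 := by
    obtain ⟨i, hi1, hi2⟩ := hedge
    have main : G.dist r (p 0) = 3 ∧ G.dist r (p 1) = 3 ∧ G.dist r (p 2) = 3 ∧
        G.dist r (p 3) = 3 ∧ G.dist r (p 4) = 3 := by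
      fin_cases i
      · have h0 : G.dist r (p 0) = 3 := hi1
        have h1 : G.dist r (p 1) = 3 := hi2
        have h2 := step _ _ _ a01 a12 n02 h0 h1
        have h3 := step _ _ _ a12 a23 n13 h1 h2
        have h4 := step _ _ _ a23 a34 n24 h2 h3
        exact ⟨h0, h1, h2, h3, h4⟩
      · have h1 : G.dist r (p 1) = 3 := hi1
        have h2 : G.dist r (p 2) = 3 := hi2
        have h0 := step _ _ _ a12.symm a01.symm n20 h2 h1
        have h3 := step _ _ _ a12 a23 n13 h1 h2
        have h4 := step _ _ _ a23 a34 n24 h2 h3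
        exact ⟨h0, h1, h2, h3, h4⟩
      · have h2 : G.dist r (p 2) = 3 := hi1
        have h3 : G.dist r (p 3) = 3 := hi2
        have h1 := step _ _ _ a23.symm a12.symm n31 h3 h2
        have h0 := step _ _ _ a12.symm a01.symm n20 h2 h1
        have h4 := step _ _ _ a23 a34 n24 h2 h3
        exact ⟨h0, h1, h2, h3, h4⟩
      · have h3 : G.dist r (p 3) = 3 := hi1
        have h4 : G.dist r (p 4) = 3 := hi2
        have h2 := step _ _ _ a34.symm a23.symm n42 h4 h3
        have h1 := step _ _ _ a23.symm a12.symm n31 h3 h2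
        have h0 := step _ _ _ a12.symm a01.symm n20 h2 h1
        exact ⟨h0, h1, h2, h3, h4⟩
    intro i
    fin_cases i
    exacts [main.1, main.2.1, main.2.2.1, main.2.2.2.1, main.2.2.2.2]
  refine ⟨hall, ?_⟩
  obtain ⟨w, hw0, hw2⟩ := key (p 0) (hall 0)
  have w0 : G.Adj (p 0) w := hw0
  have w1 : G.Adj (p 1) w := (h _ _ a01 (hall 0) (hall 1) w hw2).mp w0
  have w2 : G.Adj (p 2) w := (h _ _ a12 (hall 1) (hall 2) w hw2).mp w1
  have w3 : G.Adj (p 3) w := (h _ _ a23 (hall 2) (hall 3) w hw2).mp w2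
  have w4 : G.Adj (p 4) w := (h _ _ a34 (hall 3) (hall 4) w hw2).mp w3
  refine ⟨w, hw2, ?_⟩
  intro i
  fin_cases i
  exacts [w0.symm, w1.symm, w2.symm, w3.symm, w4.symm]
end
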